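/- Let K ∈ ℕ+, let N_1, …, N_L and U_1, …, U_L be positive reals satisfying the regularity conditions, let M ≥ 0, let (H, I, J) be an M-feasible partition of {1, …, L} whose refined partition (H, I_0, I', I_1, J) has I_1 = ∅, and let m_1, …, m_L be the memory-sharing allocation. Then the total memory-sharing rate satisfies Σ_{i=1}^{L} R^SL(m_i, K, N_i, U_i) ≤ Σ_{h∈H} K·U_h + 2·S_I²/(M − T_J + V_I). -/
import Mathlib


/-- `S_A = ∑_{i∈A} √(N_i U_i)`. -/
noncomputable def SA {L : ℕ} (N U : Fin L → ℝ) (A : Finset (Fin L)) : ℝ :=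
  ∑ i ∈ A, Real.sqrt (N i * U i)

/-- `T_A = ∑_{j∈A} N_j`. -/
noncomputable def TA {L : ℕ} (N : Fin L → ℝ) (A : Finset (Fin L)) : ℝ :=
  ∑ j ∈ A, N j

/-- `V_A = ∑_{i∈A} N_i / K`. -/
noncomputable def VA (K : ℕ+) {L : ℕ} (N : Fin L → ℝ) (A : Finset (Fin L)) : ℝ :=
  ∑ i ∈ A, N i / (K : ℝ)

/-- `M̃ = (M − T_J + V_I) / S_I`. -/
noncomputable def Mtilde (K : ℕ+) {L : ℕ} (N U : Fin L → ℝ) (M : ℝ)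
    (I J : Finset (Fin L)) : ℝ :=
  (M - TA N J + VA K N I) / SA N U I

/-- `(H, I, J)` is an `M`-feasible partition of the set of levels `{1, …, L}`:
it is a partition with `I ≠ ∅` such that `M̃ < (1/K)√(N_h/U_h)` for `h ∈ H`,
`(1/K)√(N_i/U_i) ≤ M̃ ≤ (1 + 1/K)√(N_i/U_i)` for `i ∈ I`, and
`(1 + 1/K)√(N_j/U_j) < M̃` for `j ∈ J`. -/
def MFeasible (K : ℕ+) {L : ℕ} (N U : Fin L → ℝ) (M : ℝ)
    (H I J : Finset (Fin L)) : Prop :=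
  Disjoint H I ∧ Disjoint H J ∧ Disjoint I J ∧ H ∪ I ∪ J = Finset.univ ∧
  I.Nonempty ∧
  (∀ h ∈ H, Mtilde K N U M I J < (1 / (K : ℝ)) * Real.sqrt (N h / U h)) ∧
  (∀ i ∈ I, (1 / (K : ℝ)) * Real.sqrt (N i / U i) ≤ Mtilde K N U M I J ∧
      Mtilde K N U M I J ≤ (1 + 1 / (K : ℝ)) * Real.sqrt (N i / U i)) ∧
  (∀ j ∈ J, (1 + 1 / (K : ℝ)) * Real.sqrt (N j / U j) < Mtilde K N U M I J)


/-- The memory-sharing allocation associated with an `M`-feasible partition `(H, I, J)`: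
`m_h = 0` for `h ∈ H`, `m_i = √(N_i U_i)·M̃ − N_i/K` for `i ∈ I`, `m_j = N_j` for `j ∈ J`. -/
noncomputable def msAlloc (K : ℕ+) {L : ℕ} (N U : Fin L → ℝ) (M : ℝ)
    (H I J : Finset (Fin L)) (i : Fin L) : ℝ :=
  if i ∈ H then 0
  else if i ∈ I then Real.sqrt (N i * U i) * Mtilde K N U M I J - N i / (K : ℝ)
  else N i

/-- The single-level achievable rate
`R^SL(m, K, N, U) = U · min{N/m, K} · (1 − m/N)` for `0 < m ≤ N`, and
`R^SL(0, K, N, U) = U · K`. -/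
noncomputable def RSL (m : ℝ) (K : ℕ+) (N U : ℝ) : ℝ :=
  if m = 0 then U * (K : ℝ) else U * min (N / m) (K : ℝ) * (1 - m / N)

/-- The constant `β = 1/80`. -/
noncomputable def betaML : ℝ := 1 / 80

/-- The regularity conditions: `N_i ≥ K·U_i` for every level `i`, and any two distinct
levels have popularities differing by a factor of at least `1/β² ` (`β = 1/80`). -/
def RegularML (K : ℕ+) {L : ℕ} (N U : Fin L → ℝ) : Prop :=
  (∀ i, (K : ℝ) * U i ≤ N i) ∧
  ∀ i j, i ≠ j →
    1 / betaML ^ 2 ≤ max ((U i / N i) / (U j / N j)) ((U j / N j) / (U i / N i))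

open scoped Classical in
/-- `I₀ = {i ∈ I : M < (2/K)√(N_i/U_i)}`. -/
noncomputable def I0set (K : ℕ+) {L : ℕ} (N U : Fin L → ℝ) (M : ℝ)
    (I : Finset (Fin L)) : Finset (Fin L) :=
  I.filter fun i => M < (2 / (K : ℝ)) * Real.sqrt (N i / U i)

open scoped Classical in
/-- `I₁ = {i ∈ I : M > (β + 1/K)√(N_i/U_i)} ∖ I₀`. -/
noncomputable def I1set (K : ℕ+) {L : ℕ} (N U : Fin L → ℝ) (M : ℝ)
    (I : Finset (Fin L)) : Finset (Fin L) :=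
  (I.filter fun i => (betaML + 1 / (K : ℝ)) * Real.sqrt (N i / U i) < M)
    \ I0set K N U M I

/-- `I' = I ∖ (I₀ ∪ I₁)`. -/
noncomputable def IPset (K : ℕ+) {L : ℕ} (N U : Fin L → ℝ) (M : ℝ)
    (I : Finset (Fin L)) : Finset (Fin L) :=
  I \ (I0set K N U M I ∪ I1set K N U M I)

set_option maxHeartbeats 1000000 in
lemma rsl_bound (K : ℕ+) (Nv Uv Mt : ℝ) (hN : 0 < Nv) (hU : 0 < Uv) (hMt : 0 < Mt)
    (h1 : (1 / (K : ℝ)) * Real.sqrt (Nv / Uv) ≤ Mt)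
    (h2 : Mt ≤ (1 + 1 / (K : ℝ)) * Real.sqrt (Nv / Uv)) :
    RSL (Real.sqrt (Nv * Uv) * Mt - Nv / (K : ℝ)) K Nv Uv
      ≤ 2 * Real.sqrt (Nv * Uv) / Mt := by
  set k : ℝ := (K : ℝ) with hkdef
  have hk : 0 < k := by positivity
  set s := Real.sqrt (Nv * Uv) with hsdef
  set r := Real.sqrt (Nv / Uv) with hrdef
  have hs : 0 < s := Real.sqrt_pos.2 (by positivity)
  have hr : 0 < r := Real.sqrt_pos.2 (by positivity)
  have hsr : s * r = Nv := by
    rw [hsdef, hrdef, ← Real.sqrt_mul (by positivity)]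
    rw [show Nv * Uv * (Nv / Uv) = Nv ^ 2 by field_simp]
    exact Real.sqrt_sq hN.le
  have hur : Uv * r = s := by
    have h := Real.sqrt_mul (by positivity : (0:ℝ) ≤ Uv ^ 2) (Nv / Uv)
    rw [Real.sqrt_sq hU.le] at h
    rw [hrdef, ← h, show Uv ^ 2 * (Nv / Uv) = Nv * Uv by field_simp]
  set m := s * Mt - Nv / k with hmdef
  have h1' : r ≤ k * Mt := by
    have := mul_le_mul_of_nonneg_left h1 hk.le
    field_simp at this; linarith
  have h2' : k * Mt ≤ (k + 1) * r := by
    have := mul_le_mul_of_nonneg_left h2 hk.le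
    field_simp at this; nlinarith
  have hkm : k * m = k * s * Mt - Nv := by rw [hmdef]; field_simp
  have hm0 : 0 ≤ m := by nlinarith [mul_le_mul_of_nonneg_left h1' hs.le]
  have hmN : m ≤ Nv := by nlinarith [mul_le_mul_of_nonneg_left h2' hs.le]
  have hUN : Uv * Nv = s ^ 2 := by nlinarith
  rcases le_or_gt (k * Mt) (2 * r) with hc | hc
  · have hbound : RSL m K Nv Uv ≤ Uv * k := by
      unfold RSL
      rw [← hkdef]
      split_ifs with h
      · exact le_refl _
      · have hm : 0 < m := lt_of_le_of_ne hm0 (Ne.symm h)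
        have h₁ : min (Nv / m) k ≤ k := min_le_right _ _
        have h₂ : 0 ≤ min (Nv / m) k := le_min (by positivity) hk.le
        have h₃ : 0 ≤ 1 - m / Nv := by
          have : m / Nv ≤ 1 := (div_le_one hN).2 hmN
          linarith
        have h₄ : 1 - m / Nv ≤ 1 := by
          have : 0 ≤ m / Nv := by positivity
          linarith
        have A : Uv * min (Nv / m) k ≤ Uv * k := mul_le_mul_of_nonneg_left h₁ hU.le
        have B : Uv * min (Nv / m) k * (1 - m / Nv) ≤ Uv * min (Nv / m) k * 1 :=
          mul_le_mul_of_nonneg_left h₄ (mul_nonneg hU.le h₂)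
        nlinarith
    refine hbound.trans ?_
    rw [le_div_iff₀ hMt]
    nlinarith [mul_le_mul_of_nonneg_left hc hU.le]
  · have hm : 0 < m := by nlinarith [mul_lt_mul_of_pos_left hc hs]
    have hne : m ≠ 0 := ne_of_gt hm
    unfold RSL
    rw [if_neg hne, ← hkdef]
    have h₁ : min (Nv / m) k ≤ Nv / m := min_le_left _ _
    have h₂ : 0 ≤ min (Nv / m) k := le_min (by positivity) hk.le
    have h₃ : 0 ≤ 1 - m / Nv := by
      have : m / Nv ≤ 1 := (div_le_one hN).2 hmN
      linarith
    have step1 : Uv * min (Nv / m) k * (1 - m / Nv) ≤ Uv * (Nv / m) := by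
      have hA : Uv * min (Nv / m) k * (1 - m / Nv) ≤ Uv * (Nv / m) * (1 - m / Nv) := by
        have := mul_le_mul_of_nonneg_left h₁ hU.le
        nlinarith
      refine hA.trans ?_
      have h5 : 0 ≤ m / Nv := by positivity
      nlinarith [mul_pos hU (div_pos hN hm)]
    refine step1.trans ?_
    rw [mul_div_assoc', div_le_div_iff₀ hm hMt]
    have e1 : 2 * s * (k * m) = 2 * k * s * s * Mt - 2 * s * Nv := by rw [hkm]; ring
    have e2 : 2 * s * Nv = 2 * (s * s) * r := by rw [← hsr]; ring
    have e3 : Uv * Nv * Mt * k = s ^ 2 * Mt * k := by rw [hUN]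
    have h5 := mul_lt_mul_of_pos_left hc (mul_pos hs hs)
    have key : Uv * Nv * Mt * k ≤ 2 * s * m * k := by nlinarith
    exact le_of_mul_le_mul_right key hk


/-- If the refined partition `(H, I₀, I', I₁, J)` of an `M`-feasible partition `(H, I, J)`
has `I₁ = ∅`, then the total memory-sharing rate satisfies
`∑_i R^SL(m_i, K, N_i, U_i) ≤ ∑_{h∈H} K·U_h + 2·S_I²/(M − T_J + V_I)`. -/
theorem memory_sharing_total_rate_bound (K : ℕ+) (L : ℕ) (N U : Fin L → ℝ)
    (hN : ∀ i, 0 < N i) (hU : ∀ i, 0 < U i)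
    (hreg : RegularML K N U)
    (M : ℝ) (hM : 0 ≤ M)
    (H I J : Finset (Fin L)) (hfeas : MFeasible K N U M H I J)
    (hI1 : I1set K N U M I = ∅) :
    ∑ i, RSL (msAlloc K N U M H I J i) K (N i) (U i)
      ≤ ∑ h ∈ H, (K : ℝ) * U h
        + 2 * (SA N U I) ^ 2 / (M - TA N J + VA K N I) := by
  obtain ⟨hHI, hHJ, hIJ, hunion, hIne, hHmem, hImem, hJmem⟩ := hfeas
  obtain ⟨i₀, hi₀⟩ := hIne
  have hMtpos : 0 < Mtilde K N U M I J := by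
    refine lt_of_lt_of_le ?_ (hImem i₀ hi₀).1
    have h1 : 0 < Real.sqrt (N i₀ / U i₀) := Real.sqrt_pos.2 (div_pos (hN i₀) (hU i₀))
    have h2 : (0:ℝ) < 1 / (K:ℝ) := by positivity
    exact mul_pos h2 h1
  have hSI : 0 < SA N U I :=
    Finset.sum_pos (fun i _ => Real.sqrt_pos.2 (mul_pos (hN i) (hU i))) ⟨i₀, hi₀⟩
  have hdenom : M - TA N J + VA K N I = Mtilde K N U M I J * SA N U I := by
    unfold Mtilde; field_simp
  have hsplit : ∑ i, RSL (msAlloc K N U M H I J i) K (N i) (U i)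
      = ∑ h ∈ H, RSL (msAlloc K N U M H I J h) K (N h) (U h)
        + ∑ i ∈ I, RSL (msAlloc K N U M H I J i) K (N i) (U i)
        + ∑ j ∈ J, RSL (msAlloc K N U M H I J j) K (N j) (U j) := by
    rw [← hunion, Finset.sum_union (Finset.disjoint_union_left.2 ⟨hHJ, hIJ⟩),
      Finset.sum_union hHI]
  have hHsum : ∑ h ∈ H, RSL (msAlloc K N U M H I J h) K (N h) (U h)
      = ∑ h ∈ H, (K : ℝ) * U h := by
    refine Finset.sum_congr rfl fun h hh => ?_
    simp [msAlloc, hh, RSL, mul_comm]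
  have hJsum : ∑ j ∈ J, RSL (msAlloc K N U M H I J j) K (N j) (U j) = 0 := by
    refine Finset.sum_eq_zero fun j hj => ?_
    have hjH : j ∉ H := Finset.disjoint_right.1 hHJ hj
    have hjI : j ∉ I := Finset.disjoint_right.1 hIJ hj
    simp only [msAlloc, if_neg hjH, if_neg hjI]
    rw [RSL, if_neg (hN j).ne', div_self (hN j).ne']
    ring
  have hIsum : ∑ i ∈ I, RSL (msAlloc K N U M H I J i) K (N i) (U i)
      ≤ 2 * SA N U I / Mtilde K N U M I J := by
    have : ∑ i ∈ I, RSL (msAlloc K N U M H I J i) K (N i) (U i)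
        ≤ ∑ i ∈ I, 2 * Real.sqrt (N i * U i) / Mtilde K N U M I J := by
      refine Finset.sum_le_sum fun i hi => ?_
      have hiH : i ∉ H := Finset.disjoint_right.1 hHI hi
      simp only [msAlloc, if_neg hiH, if_pos hi]
      exact rsl_bound K (N i) (U i) _ (hN i) (hU i) hMtpos
        (hImem i hi).1 (hImem i hi).2
    refine this.trans_eq ?_
    rw [SA, Finset.mul_sum, Finset.sum_div]
  have hRHS : 2 * (SA N U I) ^ 2 / (M - TA N J + VA K N I)
      = 2 * SA N U I / Mtilde K N U M I J := by
    rw [hdenom]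
    field_simp
  rw [hsplit, hHsum, hJsum, hRHS]
  linarith
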